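/- arXiv:math/0009186 — 2 statements merged into one kernel-verified Lean document; each statement's English description precedes it below -/
import Mathlib

section
/- Let 𝔤 be a finite-dimensional complex Lie algebra, let N, Ñ be 𝔤-modules and E a finite-dimensional 𝔤-module. Assume N is a direct summand of Ñ as a 𝔤-module (there exist 𝔤-module maps i : N → Ñ and p : Ñ → N with p∘i = id), and Ñ is a direct summand of N⊗E as a 𝔤-module. Then F(N,Ñ), viewed as a right module over A := F(N,N) via precomposition, is a finitely generated projective right A-module, and A (as a right module over itself) is a direct summand of F(N,Ñ). -/
/-!
Postcomposition with `p` and with `i` exhibits `A = F(N,N)` as a retract of `F(N,Ñ)`.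
For the rest, a basis `(eₜ)` of `E` with coordinate functionals `εₜ` writes the identity of
`N ⊗ E` as `∑ₜ (- ⊗ eₜ) ∘ (id ⊗ εₜ)`. The maps `id ⊗ εₜ : N ⊗ E → N` and `- ⊗ eₜ : N → N ⊗ E`
are locally finite, since they lie in the images of `E*` and `E`, finite-dimensional and stable
under the adjoint action; and locally finite maps compose, as
`⁅x, g ∘ f⁆ = ⁅x, g⁆ ∘ f + g ∘ ⁅x, f⁆`. Hence `ψ ↦ ((id ⊗ εₜ) ∘ j ∘ ψ)ₜ` and
`(aₜ) ↦ q ∘ ∑ₜ (aₜ(-) ⊗ eₜ)` exhibit `F(N,Ñ)` as a retract of `Aᵏ` as right `A`-modules.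
-/

open TensorProduct

/-- `f` belongs to the locally finite part `F(M,N)` of `Hom_ℂ(M,N)` under the adjoint action
`⁅x, f⁆ = x ∘ f - f ∘ x` of `L`: the `L`-submodule generated by `f` is finite-dimensional. -/
def InF (L : Type) [LieRing L] [LieAlgebra ℂ L] {M N : Type}
    [AddCommGroup M] [Module ℂ M] [LieRingModule L M] [LieModule ℂ L M]
    [AddCommGroup N] [Module ℂ N] [LieRingModule L N] [LieModule ℂ L N]
    (f : M →ₗ[ℂ] N) : Prop :=
  ∃ V : LieSubmodule ℂ L (M →ₗ[ℂ] N), f ∈ V ∧ FiniteDimensional ℂ V.toSubmodule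

variable (L : Type) [LieRing L] [LieAlgebra ℂ L]

/-- The locally finite part `F(M,N)` of `Hom_ℂ(M,N)`, as a `ℂ`-subspace. -/
def Fmod (M N : Type)
    [AddCommGroup M] [Module ℂ M] [LieRingModule L M] [LieModule ℂ L M]
    [AddCommGroup N] [Module ℂ N] [LieRingModule L N] [LieModule ℂ L N] :
    Submodule ℂ (M →ₗ[ℂ] N) where
  carrier := {f | InF L f}
  zero_mem' := ⟨⊥, LieSubmodule.zero_mem ⊥, by
    rw [LieSubmodule.bot_toSubmodule]; infer_instance⟩
  add_mem' := by
    rintro f g ⟨V, hfV, hV⟩ ⟨W, hgW, hW⟩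
    refine ⟨V ⊔ W, ?_, ?_⟩
    · exact add_mem ((LieSubmodule.mem_sup _ _ _).2 ⟨f, hfV, 0, W.zero_mem, by simp⟩)
        ((LieSubmodule.mem_sup _ _ _).2 ⟨0, V.zero_mem, g, hgW, by simp⟩)
    · rw [LieSubmodule.sup_toSubmodule]
      exact Submodule.finiteDimensional_sup _ _
  smul_mem' := by
    rintro c f ⟨V, hfV, hV⟩
    exact ⟨V, V.smul_mem c hfV, hV⟩

section LocallyFinite

variable {L}
variable {M P Q : Type}
  [AddCommGroup M] [Module ℂ M] [LieRingModule L M] [LieModule ℂ L M]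
  [AddCommGroup P] [Module ℂ P] [LieRingModule L P] [LieModule ℂ L P]
  [AddCommGroup Q] [Module ℂ Q] [LieRingModule L Q] [LieModule ℂ L Q]

theorem inF_of_mem {V : Submodule ℂ (M →ₗ[ℂ] P)} [FiniteDimensional ℂ V]
    (hV : ∀ (x : L), ∀ g ∈ V, ⁅x, g⁆ ∈ V) {f : M →ₗ[ℂ] P} (hf : f ∈ V) : InF L f :=
  ⟨{ V with lie_mem := fun {x g} hg => hV x g hg }, hf, ‹_›⟩

theorem inF_of_mem_range {V : Type} [AddCommGroup V] [Module ℂ V] [FiniteDimensional ℂ V]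
    (Φ : V →ₗ[ℂ] M →ₗ[ℂ] P) (hΦ : ∀ (x : L) (v : V), ⁅x, Φ v⁆ ∈ LinearMap.range Φ) (v : V) :
    InF L (Φ v) :=
  inF_of_mem (V := LinearMap.range Φ) (by rintro x _ ⟨w, rfl⟩; exact hΦ x w) ⟨v, rfl⟩

theorem lie_comp (x : L) (g : P →ₗ[ℂ] Q) (f : M →ₗ[ℂ] P) :
    ⁅x, g ∘ₗ f⁆ = ⁅x, g⁆ ∘ₗ f + g ∘ₗ ⁅x, f⁆ := by
  ext m
  simp only [LieHom.lie_apply, LinearMap.comp_apply, LinearMap.add_apply, map_sub]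
  abel

theorem InF.comp {g : P →ₗ[ℂ] Q} {f : M →ₗ[ℂ] P} (hg : InF L g) (hf : InF L f) :
    InF L (g ∘ₗ f) := by
  obtain ⟨V, hgV, hV⟩ := hg
  obtain ⟨W, hfW, hW⟩ := hf
  let U := Submodule.map₂ (LinearMap.llcomp ℂ M P Q) V.toSubmodule W.toSubmodule
  have : FiniteDimensional ℂ U :=
    Module.Finite.iff_fg.2 ((Module.Finite.iff_fg.1 hV).map₂ _ (Module.Finite.iff_fg.1 hW))
  refine inF_of_mem (V := U) (fun x => ?_) (Submodule.apply_mem_map₂ _ hgV hfW)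
  suffices U ≤ U.comap (LieModule.toEnd ℂ L _ x : (M →ₗ[ℂ] Q) →ₗ[ℂ] M →ₗ[ℂ] Q) from
    fun h hh => this hh
  refine Submodule.map₂_le.2 fun g hg f hf => ?_
  change ⁅x, g ∘ₗ f⁆ ∈ U
  rw [lie_comp]
  exact add_mem (Submodule.apply_mem_map₂ _ (V.lie_mem hg) hf)
    (Submodule.apply_mem_map₂ _ hg (W.lie_mem hf))

theorem LieModuleHom.inF (φ : P →ₗ⁅ℂ,L⁆ Q) : InF L (φ : P →ₗ[ℂ] Q) := by
  have hφ : ∀ x : L, ⁅x, (φ : P →ₗ[ℂ] Q)⁆ = 0 := fun x => by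
    ext m; simp [LieHom.lie_apply]
  refine inF_of_mem (V := ℂ ∙ (φ : P →ₗ[ℂ] Q)) (fun x g hg => ?_)
    (Submodule.mem_span_singleton_self _)
  obtain ⟨c, rfl⟩ := Submodule.mem_span_singleton.1 hg
  simp [hφ]

variable {E : Type} [AddCommGroup E] [Module ℂ E] [LieRingModule L E] [LieModule ℂ L E]
  [FiniteDimensional ℂ E]

theorem inF_mk_flip (e : E) : InF L ((TensorProduct.mk ℂ P E).flip e) :=
  inF_of_mem_range _ (fun x e => ⟨⁅x, e⁆, by ext p; simp [LieHom.lie_apply]⟩) e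

theorem inF_rid_comp_lTensor (ε : Module.Dual ℂ E) :
    InF L ((TensorProduct.rid ℂ P).toLinearMap ∘ₗ ε.lTensor P) := by
  refine inF_of_mem_range (LinearMap.llcomp ℂ _ _ _ (TensorProduct.rid ℂ P).toLinearMap ∘ₗ
    LinearMap.lTensorHom P) (fun x ε => ⟨-(ε ∘ₗ (LieModule.toEnd ℂ L E x : E →ₗ[ℂ] E)), ?_⟩) ε
  ext p e
  simp [LieHom.lie_apply]

end LocallyFinite

theorem TensorProduct.sum_rid_lTensor_coord_tmul {R P E ι : Type*} [CommSemiring R] [Fintype ι]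
    [AddCommMonoid P] [Module R P] [AddCommMonoid E] [Module R E]
    (b : Module.Basis ι R E) (w : P ⊗[R] E) :
    ∑ t, TensorProduct.rid R P ((b.coord t).lTensor P w) ⊗ₜ b t = w := by
  classical
  conv_rhs => rw [← (equivFinsuppOfBasisRight b).symm_apply_apply w]
  rw [equivFinsuppOfBasisRight_symm_apply, Finsupp.sum_fintype _ _ (by simp)]
  simp only [equivFinsuppOfBasisRight_apply]

instance (R : Type*) [Ring R] : Module.Free Rᵐᵒᵖ R :=
  Module.Free.of_equiv (MulOpposite.opLinearEquiv Rᵐᵒᵖ).symm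

instance (R : Type*) [Ring R] : Module.Finite Rᵐᵒᵖ R :=
  Module.Finite.equiv (MulOpposite.opLinearEquiv Rᵐᵒᵖ).symm

section RightModule

variable {L}
variable {N P : Type}
  [AddCommGroup N] [Module ℂ N] [LieRingModule L N] [LieModule ℂ L N]
  [AddCommGroup P] [Module ℂ P] [LieRingModule L P] [LieModule ℂ L P]
  {A : Subalgebra ℂ (Module.End ℂ N)} [Module (↥A)ᵐᵒᵖ ↥(Fmod L N P)]

def postcompToFmod (hA : ∀ f : Module.End ℂ N, f ∈ A ↔ InF L f)
    (hsmul : ∀ (a : ↥A) (ψ : ↥(Fmod L N P)),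
      ((MulOpposite.op a • ψ : ↥(Fmod L N P)) : N →ₗ[ℂ] P) =
        (ψ : N →ₗ[ℂ] P) ∘ₗ (a : Module.End ℂ N))
    (φ : N →ₗ[ℂ] P) (hφ : InF L φ) : ↥A →ₗ[(↥A)ᵐᵒᵖ] ↥(Fmod L N P) where
  toFun a := ⟨φ ∘ₗ (a : Module.End ℂ N), hφ.comp ((hA _).1 a.2)⟩
  map_add' a a' := Subtype.ext (LinearMap.comp_add _ _ _)
  map_smul' c a := by
    obtain ⟨c, rfl⟩ := MulOpposite.op_surjective c
    refine Subtype.ext ?_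
    simp only [RingHom.id_apply, hsmul, op_smul_eq_mul, Subalgebra.coe_mul,
      Module.End.mul_eq_comp, LinearMap.comp_assoc]

def postcompOfFmod (hA : ∀ f : Module.End ℂ N, f ∈ A ↔ InF L f)
    (hsmul : ∀ (a : ↥A) (ψ : ↥(Fmod L N P)),
      ((MulOpposite.op a • ψ : ↥(Fmod L N P)) : N →ₗ[ℂ] P) =
        (ψ : N →ₗ[ℂ] P) ∘ₗ (a : Module.End ℂ N))
    (φ : P →ₗ[ℂ] N) (hφ : InF L φ) : ↥(Fmod L N P) →ₗ[(↥A)ᵐᵒᵖ] ↥A where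
  toFun ψ := ⟨φ ∘ₗ (ψ : N →ₗ[ℂ] P), (hA _).2 (hφ.comp ψ.2)⟩
  map_add' ψ ψ' := Subtype.ext (LinearMap.comp_add _ _ _)
  map_smul' c ψ := by
    obtain ⟨c, rfl⟩ := MulOpposite.op_surjective c
    refine Subtype.ext ?_
    simp only [RingHom.id_apply, hsmul, op_smul_eq_mul, Subalgebra.coe_mul,
      Module.End.mul_eq_comp, LinearMap.comp_assoc]

theorem exists_retraction_subalgebra (hA : ∀ f : Module.End ℂ N, f ∈ A ↔ InF L f)
    (hsmul : ∀ (a : ↥A) (ψ : ↥(Fmod L N P)),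
      ((MulOpposite.op a • ψ : ↥(Fmod L N P)) : N →ₗ[ℂ] P) =
        (ψ : N →ₗ[ℂ] P) ∘ₗ (a : Module.End ℂ N))
    (i : N →ₗ⁅ℂ,L⁆ P) (p : P →ₗ⁅ℂ,L⁆ N) (hpi : ∀ n : N, p (i n) = n) :
    ∃ (u : ↥A →ₗ[(↥A)ᵐᵒᵖ] ↥(Fmod L N P)) (v : ↥(Fmod L N P) →ₗ[(↥A)ᵐᵒᵖ] ↥A),
      v ∘ₗ u = LinearMap.id :=
  ⟨postcompToFmod hA hsmul i i.inF, postcompOfFmod hA hsmul p p.inF,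
    LinearMap.ext fun _ => Subtype.ext <| LinearMap.ext fun _ => hpi _⟩

theorem exists_retraction_pi (hA : ∀ f : Module.End ℂ N, f ∈ A ↔ InF L f)
    (hsmul : ∀ (a : ↥A) (ψ : ↥(Fmod L N P)),
      ((MulOpposite.op a • ψ : ↥(Fmod L N P)) : N →ₗ[ℂ] P) =
        (ψ : N →ₗ[ℂ] P) ∘ₗ (a : Module.End ℂ N))
    {E : Type} [AddCommGroup E] [Module ℂ E] [LieRingModule L E] [LieModule ℂ L E]
    [FiniteDimensional ℂ E]
    (j : P →ₗ⁅ℂ,L⁆ N ⊗[ℂ] E) (q : N ⊗[ℂ] E →ₗ⁅ℂ,L⁆ P) (hqj : ∀ m : P, q (j m) = m) :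
    ∃ (k : ℕ) (s : ↥(Fmod L N P) →ₗ[(↥A)ᵐᵒᵖ] (Fin k → ↥A))
      (r : (Fin k → ↥A) →ₗ[(↥A)ᵐᵒᵖ] ↥(Fmod L N P)), r ∘ₗ s = LinearMap.id := by
  let b := Module.finBasis ℂ E
  let coord (t : Fin _) : N ⊗[ℂ] E →ₗ[ℂ] N :=
    (TensorProduct.rid ℂ N).toLinearMap ∘ₗ (b.coord t).lTensor N
  let s := LinearMap.pi fun t => postcompOfFmod hA hsmul (coord t ∘ₗ (j : P →ₗ[ℂ] N ⊗[ℂ] E))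
    ((inF_rid_comp_lTensor _).comp j.inF)
  let r := ∑ t, postcompToFmod hA hsmul
    ((q : N ⊗[ℂ] E →ₗ[ℂ] P) ∘ₗ (TensorProduct.mk ℂ N E).flip (b t))
    (q.inF.comp (inF_mk_flip _)) ∘ₗ LinearMap.proj t
  refine ⟨_, s, r, LinearMap.ext fun ψ => Subtype.ext <| LinearMap.ext fun n => ?_⟩
  simp only [r, s, LinearMap.sum_apply, LinearMap.comp_apply, LinearMap.pi_apply,
    LinearMap.proj_apply, Submodule.coe_sum, LinearMap.id_apply]
  change ∑ t, q (TensorProduct.rid ℂ N ((b.coord t).lTensor N (j ((ψ : N →ₗ[ℂ] P) n))) ⊗ₜ b t) =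
    (ψ : N →ₗ[ℂ] P) n
  rw [← map_sum, TensorProduct.sum_rid_lTensor_coord_tmul, hqj]

end RightModule

set_option synthInstance.maxHeartbeats 1000000 in
theorem statement5 (N Ntilde E : Type)
    [AddCommGroup N] [Module ℂ N] [LieRingModule L N] [LieModule ℂ L N]
    [AddCommGroup Ntilde] [Module ℂ Ntilde] [LieRingModule L Ntilde] [LieModule ℂ L Ntilde]
    [AddCommGroup E] [Module ℂ E] [LieRingModule L E] [LieModule ℂ L E]
    [FiniteDimensional ℂ E]
    (i : N →ₗ⁅ℂ,L⁆ Ntilde) (p : Ntilde →ₗ⁅ℂ,L⁆ N) (hpi : ∀ n : N, p (i n) = n)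
    (j : Ntilde →ₗ⁅ℂ,L⁆ (N ⊗[ℂ] E)) (q : (N ⊗[ℂ] E) →ₗ⁅ℂ,L⁆ Ntilde)
    (hqj : ∀ m : Ntilde, q (j m) = m)
    (A : Subalgebra ℂ (Module.End ℂ N)) (hA : ∀ f : Module.End ℂ N, f ∈ A ↔ InF L f)
    [Module (↥A)ᵐᵒᵖ ↥(Fmod L N Ntilde)]
    (hsmul : ∀ (a : ↥A) (ψ : ↥(Fmod L N Ntilde)),
      ((MulOpposite.op a • ψ : ↥(Fmod L N Ntilde)) : N →ₗ[ℂ] Ntilde) =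
        (ψ : N →ₗ[ℂ] Ntilde) ∘ₗ (a : Module.End ℂ N)) :
    Module.Finite (↥A)ᵐᵒᵖ ↥(Fmod L N Ntilde) ∧
    Module.Projective (↥A)ᵐᵒᵖ ↥(Fmod L N Ntilde) ∧
    ∃ (u : ↥A →ₗ[(↥A)ᵐᵒᵖ] ↥(Fmod L N Ntilde))
      (v : ↥(Fmod L N Ntilde) →ₗ[(↥A)ᵐᵒᵖ] ↥A), v.comp u = LinearMap.id := by
  obtain ⟨k, s, r, hrs⟩ := exists_retraction_pi hA hsmul j q hqj
  exact ⟨Module.Finite.of_surjective r fun ψ => ⟨s ψ, LinearMap.congr_fun hrs ψ⟩,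
    Module.Projective.of_split s r hrs, exists_retraction_subalgebra hA hsmul i p hpi⟩
end

section
/- Let l ≥ 1, let k₁, …, k_l ∈ ℂ with k_l = 0 and each kᵢ (1 ≤ i ≤ l−1) lexicographically positive (Re kᵢ > 0, or Re kᵢ = 0 and Im kᵢ > 0). Set u = (k₁ + 1/2, …, k_{l−1} + 1/2, 1/2) and v = (k₁, …, k_{l−1}, 0) in ℂ^l, and let e_l be the l-th standard basis vector, so u − e_l = (k₁ + 1/2, …, k_{l−1} + 1/2, −1/2). Then every signed permutation w of ℂ^l fixing u − e_l also fixes v: w(u − e_l) = u − e_l implies w(v) = v. In other words, Stab_W(u − e_l) ⊆ Stab_W(v). -/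
/-- `w` is a signed permutation of `ℂ^l`: there are a permutation `σ` of the coordinates and
signs `ε i ∈ {1, -1}` with `(w v) i = ε i * v (σ⁻¹ i)`. -/
def IsSignedPerm {l : ℕ} (w : (Fin l → ℂ) →ₗ[ℂ] (Fin l → ℂ)) : Prop :=
  ∃ (σ : Equiv.Perm (Fin l)) (ε : Fin l → ℂ),
    (∀ i, ε i = 1 ∨ ε i = -1) ∧ ∀ (v : Fin l → ℂ) (i : Fin l), w v i = ε i * v (σ.symm i)

/-- `Γ = {0,1}^l`, the set of vectors with all coordinates `0` or `1`. -/
def Gam (l : ℕ) : Set (Fin l → ℂ) := {γ | ∀ i, γ i = 0 ∨ γ i = 1}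

/-- `ρ₁ = (1/2, …, 1/2)`. -/
noncomputable def rho1 (l : ℕ) : Fin l → ℂ := fun _ => 1/2

/-- The shifted action `w_* γ = w(γ - ρ₁) + ρ₁`. -/
noncomputable def wstar {l : ℕ} (w : (Fin l → ℂ) →ₗ[ℂ] (Fin l → ℂ)) (γ : Fin l → ℂ) : Fin l → ℂ :=
  w (γ - rho1 l) + rho1 l

/-- `z ∈ ℂ` is lexicographically positive: `Re z > 0`, or `Re z = 0` and `Im z > 0`. -/
def LexPos (z : ℂ) : Prop := 0 < z.re ∨ (z.re = 0 ∧ 0 < z.im)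

/-!
Write `u' = u - e_l`. Since `w` fixes `u'`, it maps each coordinate of `u'` to `±` a coordinate
of `u'`. Lexicographic positivity makes `k_i + 1/2 ≠ ±1/2`, so the coordinate `-1/2` of `u'` is
isolated and `σ` fixes `l`. All other coordinates `k_i + 1/2` have positive real part, so no
sign `-1` can occur among them, and `w` acts on them, hence on the `k_i`, by a plain
permutation preserving the values.
-/

theorem LexPos.ne_zero {z : ℂ} (hz : LexPos z) : z ≠ 0 := by
  rintro rfl
  rcases hz with h | ⟨-, h⟩ <;> simp at h

theorem LexPos.re_nonneg {z : ℂ} (hz : LexPos z) : 0 ≤ z.re := by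
  rcases hz with h | ⟨h, -⟩ <;> linarith

theorem Complex.add_half_re (z : ℂ) : (z + 1/2).re = z.re + 1/2 := by
  simp

theorem eq_one_of_sign_mul_eq {ε a b : ℂ} (hε : ε = 1 ∨ ε = -1) (ha : 0 < a.re)
    (hb : 0 < b.re) (h : ε * a = b) : ε = 1 := by
  refine hε.resolve_right fun hneg => ?_
  have hre := congrArg Complex.re h
  simp only [hneg, neg_mul, one_mul, Complex.neg_re] at hre
  linarith

theorem Equiv.Perm.symm_apply_eq_self_of_sign_mul_eq {ι R : Type*} [Ring R] (σ : Equiv.Perm ι)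
    {ε x : ι → R} (hε : ∀ i, ε i = 1 ∨ ε i = -1) (hx : ∀ i, ε i * x (σ.symm i) = x i) {j : ι}
    (hj : ∀ i, x i = x j ∨ x i = -x j → i = j) : σ.symm j = j := by
  rw [Equiv.symm_apply_eq]
  refine (hj (σ j) ?_).symm
  rw [← hx (σ j), Equiv.symm_apply_apply]
  rcases hε (σ j) with h | h <;> simp [h]

/-- Let `k₁, …, k_l ∈ ℂ` with `k_l = 0` and `k_i` lexicographically positive
for `i < l`, and set `u = (k₁ + 1/2, …, k_{l-1} + 1/2, 1/2)`, `v = (k₁, …, k_{l-1}, 0)`, so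
that `u - e_l = (k₁ + 1/2, …, k_{l-1} + 1/2, -1/2)`. Every signed permutation fixing `u - e_l`
also fixes `v`: `Stab_W(u - e_l) ⊆ Stab_W(v)`.  (Here `l = m + 1 ≥ 1`.) -/
theorem statement12 (m : ℕ) (k : Fin (m + 1) → ℂ)
    (hlast : k (Fin.last m) = 0)
    (hpos : ∀ i : Fin (m + 1), i ≠ Fin.last m → LexPos (k i))
    (w : (Fin (m + 1) → ℂ) →ₗ[ℂ] (Fin (m + 1) → ℂ)) (hw : IsSignedPerm w)
    (hfix : w ((fun i => k i + 1/2) - Pi.single (Fin.last m) (1 : ℂ)) =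
      (fun i => k i + 1/2) - Pi.single (Fin.last m) (1 : ℂ)) :
    w k = k := by
  obtain ⟨σ, ε, hε, hw⟩ := hw
  set u : Fin (m + 1) → ℂ := (fun i => k i + 1/2) - Pi.single (Fin.last m) (1 : ℂ)
  have hu : ∀ i, ε i * u (σ.symm i) = u i := fun i => by rw [← hw, hfix]
  have hu_ne : ∀ i ≠ Fin.last m, u i = k i + 1/2 := fun i hi => by simp [u, hi]
  have hu_last : u (Fin.last m) = -(1/2) := by norm_num [u, hlast]
  have hu_re : ∀ i ≠ Fin.last m, 0 < (u i).re := fun i hi => by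
    rw [hu_ne i hi, Complex.add_half_re]; linarith [(hpos i hi).re_nonneg]
  have hσ : σ.symm (Fin.last m) = Fin.last m := by
    refine σ.symm_apply_eq_self_of_sign_mul_eq hε hu fun i hi => ?_
    by_contra hne
    rw [hu_last, hu_ne i hne] at hi
    rcases hi with hi | hi
    · have hk : k i = -1 := by linear_combination hi
      have := (hpos i hne).re_nonneg
      norm_num [hk] at this
    · exact (hpos i hne).ne_zero (by linear_combination hi)
  funext i
  rw [hw]
  by_cases hi : i = Fin.last m
  · rw [hi, hσ, hlast, mul_zero]
  have hi' : σ.symm i ≠ Fin.last m := hσ ▸ σ.symm.injective.ne hi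
  have hε1 : ε i = 1 := eq_one_of_sign_mul_eq (hε i) (hu_re _ hi') (hu_re i hi) (hu i)
  have hui := hu i
  rw [hε1, one_mul, hu_ne _ hi', hu_ne i hi] at hui
  rw [hε1, one_mul]
  exact add_right_cancel hui
end
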